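/- Let V be a finite Borel measure on (0,∞), let ε, c, c₁, c₂ ∈ (0, 𝓛_V(0)) with c₁ < c₂, and set α = √(τ_V(c)·λ_V(c)). Then: (i) for every A > 0, (α/(α+A)) · T_V(c + (A+α)/(A·e^{Aα})) ≤ τ_V(c) ≤ T_V(c/(1+c)); and (ii) for every B > 0, T_V(c₁ + c₂·e^{−T_V(ε)·λ_V(c₁)} + 2ε·e^{−B}) ≤ T_V(ε) + 2B/λ_V(c₂). -/

import Mathlib

open MeasureTheory Filter Set Topology

/-- The Laplace transform `𝓛_V(t) = ∫_{(0,∞)} e^{-tλ} dV(λ)` of a (finite Borel) measure `V`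
on `(0,∞)`. -/
noncomputable def lap (V : Measure ℝ) (t : ℝ) : ℝ :=
  ∫ x in Ioi (0 : ℝ), Real.exp (-t * x) ∂V

/-- `V(λ) = V((0,λ])`, the nondecreasing right-continuous function associated to `V`. -/
noncomputable def cdfV (V : Measure ℝ) (l : ℝ) : ℝ :=
  (V (Ioc 0 l)).toReal

/-- The mixing time `T_V(ε) = min{t ≥ 0 : 𝓛_V(t) ≤ ε}`. -/
noncomputable def TmixV (V : Measure ℝ) (ε : ℝ) : ℝ :=
  sInf {t : ℝ | 0 ≤ t ∧ lap V t ≤ ε}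

/-- `λ_V(c) = inf{λ > 0 : V(λ) > c}`. -/
noncomputable def lamV (V : Measure ℝ) (c : ℝ) : ℝ :=
  sInf {l : ℝ | 0 < l ∧ c < cdfV V l}

/-- `τ_V(c) = sup_{λ ≥ λ_V(c)} log(1 + V(λ))/λ`. -/
noncomputable def tauV (V : Measure ℝ) (c : ℝ) : ℝ :=
  sSup ((fun l => Real.log (1 + cdfV V l) / l) '' Ici (lamV V c))

/-- `t` is a cutoff time for the sequence of Laplace transforms `(𝓛_{V_n})` (in the regime
`𝓛_{V_n}(0) → ∞`): `𝓛_{V_n}(a t_n) → 0` for `a > 1` and `𝓛_{V_n}(a t_n) → ∞` for `0 < a < 1`. -/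
def IsLapCutoffTime (V : ℕ → Measure ℝ) (t : ℕ → ℝ) : Prop :=
  (∀ᶠ n in atTop, 0 < t n) ∧
    (∀ a : ℝ, 1 < a → Tendsto (fun n => lap (V n) (a * t n)) atTop (𝓝 0)) ∧
    (∀ a : ℝ, a ∈ Ioo (0 : ℝ) 1 → Tendsto (fun n => lap (V n) (a * t n)) atTop atTop)

/-- The sequence of Laplace transforms `(𝓛_{V_n})` has a cutoff. -/
def LapCutoff (V : ℕ → Measure ℝ) : Prop :=
  ∃ t : ℕ → ℝ, IsLapCutoffTime V t

/-!
Split `(0, ∞)` at `λ_V(c)`. Below `λ_V(c)` the mass of `V` is at most `c`, so that part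
contributes at most `c` to `𝓛_V(t)`. Above it, the definition of `τ = τ_V(c)` gives
`V(λ) ≤ e^{τλ}`; writing `e^{-tx} = ∫_x^∞ t e^{-ts} ds` and applying Tonelli, the tail of
`𝓛_V(t)` is at most `t/(t-τ) · e^{-(t-τ)λ_V(c)}`. Evaluating at `t = (1 + A/α) τ` gives the
lower bound of (i). The upper bound of (i) comes from `𝓛_V(t) ≥ V(λ) e^{-tλ}` and the
monotonicity of `x ↦ x/(1+x)`. For (ii), evaluate `𝓛_V` at `T_V(ε) + 2B/λ_V(c₂)` and split at
`λ_V(c₁) ≤ λ_V(c₂)`: the three pieces are bounded by `c₁`, by `c₂ e^{-T_V(ε) λ_V(c₁)}`, and by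
`e^{-2B} 𝓛_V(T_V(ε)) ≤ e^{-2B} ε`.
-/

open Real
open scoped ENNReal

lemma norm_exp_neg_mul_le_one {t x : ℝ} (ht : 0 ≤ t) (hx : 0 ≤ x) : ‖exp (-t * x)‖ ≤ 1 := by
  rw [norm_of_nonneg (exp_pos _).le, exp_le_one_iff]
  nlinarith

lemma setIntegral_exp_neg_mul_le {μ : Measure ℝ} [IsFiniteMeasure μ] {S : Set ℝ} {a t : ℝ}
    (hS : S ⊆ Ici a) (ht : 0 ≤ t) : ∫ x in S, exp (-t * x) ∂μ ≤ exp (-t * a) * μ.real S := by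
  refine (le_norm_self _).trans <| norm_setIntegral_le_of_norm_le_const (measure_lt_top μ S)
    fun x hx => ?_
  rw [norm_of_nonneg (exp_pos _).le, exp_le_exp]
  nlinarith [mem_Ici.mp (hS hx)]

lemma ofReal_exp_neg_mul_eq_lintegral {t : ℝ} (ht : 0 < t) (x : ℝ) :
    ENNReal.ofReal (exp (-t * x)) = ∫⁻ s in Ioi x, ENNReal.ofReal (t * exp (-t * s)) := by
  rw [← ofReal_integral_eq_lintegral_ofReal
    ((integrableOn_exp_mul_Ioi (neg_lt_zero.mpr ht) x).const_mul t)
    (ae_of_all _ fun _ => by positivity), integral_const_mul,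
    integral_exp_mul_Ioi (neg_lt_zero.mpr ht)]
  field_simp

lemma setLIntegral_exp_neg_mul_eq (μ : Measure ℝ) [SFinite μ] {t : ℝ} (ht : 0 < t) (S : Set ℝ) :
    ∫⁻ x in S, ENNReal.ofReal (exp (-t * x)) ∂μ =
      ∫⁻ s, ENNReal.ofReal (t * exp (-t * s)) * μ (Iio s ∩ S) := by
  set g : ℝ → ℝ≥0∞ := fun s => ENNReal.ofReal (t * exp (-t * s))
  have hg : Measurable g := by fun_prop
  have hmeas : Measurable (Function.uncurry fun x s => (Ioi x).indicator g s) :=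
    (hg.comp measurable_snd).indicator (measurableSet_lt measurable_fst measurable_snd)
  calc ∫⁻ x in S, ENNReal.ofReal (exp (-t * x)) ∂μ
      = ∫⁻ x in S, (∫⁻ s, (Ioi x).indicator g s) ∂μ := by
        simp_rw [lintegral_indicator measurableSet_Ioi, g, ofReal_exp_neg_mul_eq_lintegral ht]
    _ = ∫⁻ s, ∫⁻ x in S, (Ioi x).indicator g s ∂μ :=
        lintegral_lintegral_swap hmeas.aemeasurable
    _ = ∫⁻ s, ∫⁻ x in S, (Iio s).indicator (fun _ => g s) x ∂μ := rfl
    _ = ∫⁻ s, g s * μ (Iio s ∩ S) := by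
        simp_rw [lintegral_indicator_const measurableSet_Iio,
          Measure.restrict_apply measurableSet_Iio]

lemma setIntegral_Ici_exp_neg_mul_le (μ : Measure ℝ) [SFinite μ] {a t τ : ℝ} (ht : 0 < t)
    (hτt : τ < t) (hμ : ∀ s, a < s → μ (Ico a s) ≤ ENNReal.ofReal (exp (τ * s))) :
    ∫ x in Ici a, exp (-t * x) ∂μ ≤ t / (t - τ) * exp (-(t - τ) * a) := by
  have hδ : 0 < t - τ := sub_pos.mpr hτt
  have hbound : ∀ s, ENNReal.ofReal (t * exp (-t * s)) * μ (Iio s ∩ Ici a) ≤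
      (Ioi a).indicator (fun s => ENNReal.ofReal (t * exp (-(t - τ) * s))) s := by
    intro s
    rcases le_or_gt s a with hs | hs
    · simp [Iio_inter_Ici, Ico_eq_empty_of_le hs]
    · rw [indicator_of_mem (mem_Ioi.mpr hs), Iio_inter_Ici]
      calc ENNReal.ofReal (t * exp (-t * s)) * μ (Ico a s)
          ≤ ENNReal.ofReal (t * exp (-t * s)) * ENNReal.ofReal (exp (τ * s)) := by
            gcongr
            exact hμ s hs
        _ = ENNReal.ofReal (t * exp (-(t - τ) * s)) := by
            rw [← ENNReal.ofReal_mul (by positivity), mul_assoc, ← exp_add]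
            ring_nf
  have hlint : ∫⁻ x in Ici a, ENNReal.ofReal (exp (-t * x)) ∂μ ≤
      ENNReal.ofReal (t / (t - τ) * exp (-(t - τ) * a)) := by
    calc ∫⁻ x in Ici a, ENNReal.ofReal (exp (-t * x)) ∂μ
        ≤ ∫⁻ s in Ioi a, ENNReal.ofReal (t * exp (-(t - τ) * s)) := by
          rw [setLIntegral_exp_neg_mul_eq μ ht, ← lintegral_indicator measurableSet_Ioi]
          exact lintegral_mono hbound
      _ = ENNReal.ofReal (t / (t - τ) * exp (-(t - τ) * a)) := by
          rw [← ofReal_integral_eq_lintegral_ofReal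
            ((integrableOn_exp_mul_Ioi (neg_lt_zero.mpr hδ) a).const_mul t)
            (ae_of_all _ fun _ => by positivity), integral_const_mul,
            integral_exp_mul_Ioi (neg_lt_zero.mpr hδ)]
          congr 1
          field_simp
  rw [integral_eq_lintegral_of_nonneg_ae (ae_of_all _ fun _ => (exp_pos _).le) (by fun_prop)]
  exact ENNReal.toReal_le_of_le_ofReal (by positivity) hlint

section

variable {V : Measure ℝ}

lemma lap_zero_eq : lap V 0 = V.real (Ioi 0) := by
  simp [lap]

lemma TmixV_nonneg (ε : ℝ) : 0 ≤ TmixV V ε :=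
  Real.sInf_nonneg fun _ ht => ht.1

lemma TmixV_le {t ε : ℝ} (ht : 0 ≤ t) (h : lap V t ≤ ε) : TmixV V ε ≤ t :=
  csInf_le ⟨0, fun _ hs => hs.1⟩ ⟨ht, h⟩

lemma cdfV_of_nonpos {l : ℝ} (hl : l ≤ 0) : cdfV V l = 0 := by
  simp [cdfV, Ioc_eq_empty_of_le hl]

lemma lamV_bddBelow (c : ℝ) : BddBelow {l : ℝ | 0 < l ∧ c < cdfV V l} :=
  ⟨0, fun _ hl => hl.1.le⟩

lemma cdfV_le_of_lt_lamV {c l : ℝ} (hl : 0 < l) (hlc : l < lamV V c) : cdfV V l ≤ c :=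
  not_lt.mp fun h => (csInf_le (lamV_bddBelow c) ⟨hl, h⟩).not_gt hlc

variable [IsFiniteMeasure V]

lemma integrableOn_exp_neg_mul {t : ℝ} (ht : 0 ≤ t) :
    IntegrableOn (fun x => exp (-t * x)) (Ioi 0) V :=
  (integrable_const (1 : ℝ)).mono' (by fun_prop) <|
    (ae_restrict_iff' measurableSet_Ioi).mpr <| ae_of_all _ fun _ hx =>
      norm_exp_neg_mul_le_one ht (le_of_lt hx)

lemma continuousOn_lap : ContinuousOn (lap V) (Ici 0) :=
  continuousOn_of_dominated (bound := fun _ => 1) (fun _ _ => by fun_prop)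
    (fun _ ht => (ae_restrict_iff' measurableSet_Ioi).mpr <| ae_of_all _ fun _ hx =>
      norm_exp_neg_mul_le_one ht (le_of_lt hx))
    (integrable_const _) (ae_of_all _ fun _ => by fun_prop)

lemma tendsto_lap_atTop : Tendsto (lap V) atTop (𝓝 0) := by
  have h := tendsto_integral_filter_of_dominated_convergence (μ := V.restrict (Ioi 0))
    (F := fun t x => exp (-t * x)) (f := fun _ => 0) (fun _ => 1)
    (Eventually.of_forall fun _ => by fun_prop)
    ((eventually_ge_atTop 0).mono fun _ ht => (ae_restrict_iff' measurableSet_Ioi).mpr <|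
      ae_of_all _ fun _ hx => norm_exp_neg_mul_le_one ht (le_of_lt hx))
    (integrable_const _)
    ((ae_restrict_iff' measurableSet_Ioi).mpr <| ae_of_all _ fun x (hx : 0 < x) =>
      tendsto_exp_atBot.comp (tendsto_neg_atTop_atBot.atBot_mul_const hx))
  rw [integral_zero] at h
  exact h

/-- The infimum defining `T_V(ε)` is attained, by continuity of `𝓛_V` on `[0, ∞)`. -/
lemma lap_TmixV_le {ε : ℝ} (hε : 0 < ε) : lap V (TmixV V ε) ≤ ε := by
  have hclosed : IsClosed {t : ℝ | 0 ≤ t ∧ lap V t ≤ ε} :=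
    continuousOn_lap.preimage_isClosed_of_isClosed isClosed_Ici isClosed_Iic
  have hne : {t : ℝ | 0 ≤ t ∧ lap V t ≤ ε}.Nonempty :=
    ((eventually_ge_atTop 0).and (tendsto_lap_atTop.eventually (ge_mem_nhds hε))).exists
  exact (hclosed.csInf_mem hne ⟨0, fun _ ht => ht.1⟩).2

lemma lap_eq_setIntegral_Ioo_add_Ici {a t : ℝ} (ha : 0 < a) (ht : 0 ≤ t) :
    lap V t = ∫ x in Ioo 0 a, exp (-t * x) ∂V + ∫ x in Ici a, exp (-t * x) ∂V := by
  have h := integrableOn_exp_neg_mul (V := V) ht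
  rw [← Ioo_union_Ici_eq_Ioi ha] at h
  rw [lap, ← Ioo_union_Ici_eq_Ioi ha]
  exact setIntegral_union (disjoint_left.mpr fun _ hx hx' => hx.2.not_ge hx') measurableSet_Ici
    (h.mono_set subset_union_left) (h.mono_set subset_union_right)

lemma cdfV_mul_exp_le_lap {t : ℝ} (ht : 0 ≤ t) (l : ℝ) : cdfV V l * exp (-t * l) ≤ lap V t :=
  calc cdfV V l * exp (-t * l) = ∫ _ in Ioc 0 l, exp (-t * l) ∂V := by
        rw [setIntegral_const, smul_eq_mul]
        rfl
    _ ≤ ∫ x in Ioc 0 l, exp (-t * x) ∂V :=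
        setIntegral_mono_on (integrableOn_const (measure_ne_top V _))
          ((integrableOn_exp_neg_mul ht).mono_set Ioc_subset_Ioi_self) measurableSet_Ioc
          fun x hx => exp_le_exp.mpr (by nlinarith [hx.2])
    _ ≤ lap V t := setIntegral_mono_set (integrableOn_exp_neg_mul ht)
        (ae_of_all _ fun _ => (exp_pos _).le) Ioc_subset_Ioi_self.eventuallyLE

lemma cdfV_mono : Monotone (cdfV V) := fun _ _ h =>
  measureReal_mono (Ioc_subset_Ioc_right h)

lemma ofReal_cdfV (l : ℝ) : ENNReal.ofReal (cdfV V l) = V (Ioc 0 l) :=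
  ENNReal.ofReal_toReal (measure_ne_top V _)

lemma cdfV_le_lap_zero (l : ℝ) : cdfV V l ≤ lap V 0 :=
  lap_zero_eq (V := V) ▸ measureReal_mono Ioc_subset_Ioi_self

lemma tendsto_cdfV_atTop : Tendsto (cdfV V) atTop (𝓝 (lap V 0)) := by
  have h := tendsto_measure_iUnion_atTop (μ := V) (s := Ioc 0) fun _ _ h => Ioc_subset_Ioc_right h
  rw [iUnion_Ioc_right] at h
  rw [lap_zero_eq]
  exact (ENNReal.tendsto_toReal (measure_ne_top V _)).comp h

lemma tendsto_cdfV_nhdsGT (a : ℝ) : Tendsto (cdfV V) (𝓝[>] a) (𝓝 (cdfV V a)) := by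
  have h := tendsto_measure_biInter_gt (μ := V) (s := Ioc 0) (a := a)
    (fun _ _ => measurableSet_Ioc.nullMeasurableSet) (fun _ _ _ h => Ioc_subset_Ioc_right h)
    ⟨a + 1, by linarith, measure_ne_top V _⟩
  have hinter : ⋂ r > a, Ioc 0 r = Ioc 0 a := by
    ext x
    simp only [mem_iInter, mem_Ioc]
    exact ⟨fun hx => ⟨(hx (a + 1) (by linarith)).1, le_of_forall_gt_imp_ge_of_dense
      fun r hr => (hx r hr).2⟩, fun hx r hr => ⟨hx.1, hx.2.trans hr.le⟩⟩
  rw [hinter] at h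
  exact (ENNReal.tendsto_toReal (measure_ne_top V _)).comp h

lemma lamV_set_nonempty {c : ℝ} (hc : c < lap V 0) : {l : ℝ | 0 < l ∧ c < cdfV V l}.Nonempty :=
  ((eventually_gt_atTop 0).and (tendsto_cdfV_atTop.eventually (lt_mem_nhds hc))).exists

lemma lt_cdfV_of_lamV_lt {c l : ℝ} (hc : c < lap V 0) (hcl : lamV V c < l) : c < cdfV V l := by
  obtain ⟨l', hl', hl'l⟩ := (csInf_lt_iff (lamV_bddBelow c) (lamV_set_nonempty hc)).mp hcl
  exact hl'.2.trans_le (cdfV_mono hl'l.le)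

lemma le_cdfV_lamV {c : ℝ} (hc : c < lap V 0) : c ≤ cdfV V (lamV V c) :=
  ge_of_tendsto (tendsto_cdfV_nhdsGT _)
    (eventually_nhdsWithin_of_forall fun _ hl => (lt_cdfV_of_lamV_lt hc hl).le)

lemma lamV_pos {c : ℝ} (hc : 0 < c) (hclt : c < lap V 0) : 0 < lamV V c := by
  by_contra! h
  have := le_cdfV_lamV hclt
  rw [cdfV_of_nonpos h] at this
  linarith

lemma lamV_mono {c₁ c₂ : ℝ} (hc₂ : c₂ < lap V 0) (h : c₁ ≤ c₂) : lamV V c₁ ≤ lamV V c₂ :=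
  csInf_le_csInf (lamV_bddBelow c₁) (lamV_set_nonempty hc₂) fun _ hl => ⟨hl.1, h.trans_lt hl.2⟩

/-- `V((0, λ_V(c)))` is the left limit of `V(λ)` at `λ_V(c)`, hence at most `c`. -/
lemma measureReal_Ioo_lamV_le {c : ℝ} (hc : 0 ≤ c) : V.real (Ioo 0 (lamV V c)) ≤ c := by
  set l₀ := lamV V c
  set l : ℕ → ℝ := fun n => l₀ - 1 / (n + 1)
  have hl_mono : Monotone l := fun m n h => by
    simp only [l]
    gcongr
  have hlt : ∀ n, l n < l₀ := fun n => by
    simp only [l, sub_lt_self_iff]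
    positivity
  have hlim : Tendsto l atTop (𝓝 l₀) := by
    simpa only [sub_zero] using
      tendsto_const_nhds.sub (tendsto_one_div_add_atTop_nhds_zero_nat (𝕜 := ℝ))
  have hunion : ⋃ n, Ioc 0 (l n) = Ioo 0 l₀ := by
    rw [← Ioi_inter_Iio, ← iUnion_Iic_eq_Iio_of_lt_of_tendsto hlt hlim, inter_iUnion]
    rfl
  have h := tendsto_measure_iUnion_atTop (μ := V) (s := fun n => Ioc 0 (l n))
    fun _ _ h => Ioc_subset_Ioc_right (hl_mono h)
  rw [hunion] at h
  refine le_of_tendsto ((ENNReal.tendsto_toReal (measure_ne_top V _)).comp h)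
    (Eventually.of_forall fun n => ?_)
  show cdfV V (l n) ≤ c
  rcases le_or_gt (l n) 0 with hn | hn
  · rw [cdfV_of_nonpos hn]
    exact hc
  · exact cdfV_le_of_lt_lamV hn (hlt n)

lemma setIntegral_Ioo_lamV_le {c t : ℝ} (hc : 0 ≤ c) (ht : 0 ≤ t) :
    ∫ x in Ioo 0 (lamV V c), exp (-t * x) ∂V ≤ c :=
  (setIntegral_exp_neg_mul_le (a := 0) (Ioo_subset_Icc_self.trans Icc_subset_Ici_self) ht).trans
    (by rw [mul_zero, exp_zero, one_mul]; exact measureReal_Ioo_lamV_le hc)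

lemma bddAbove_tauV {c : ℝ} (hl : 0 < lamV V c) :
    BddAbove ((fun l => log (1 + cdfV V l) / l) '' Ici (lamV V c)) := by
  refine ⟨log (1 + lap V 0) / lamV V c, ?_⟩
  rintro _ ⟨l, hl' : lamV V c ≤ l, rfl⟩
  have hcdf := cdfV_le_lap_zero (V := V) l
  have hcdf0 : 0 ≤ cdfV V l := ENNReal.toReal_nonneg
  exact div_le_div₀ (log_nonneg (by linarith)) (log_le_log (by linarith) (by linarith)) hl hl'

lemma log_one_add_cdfV_div_le_tauV {c l : ℝ} (hl₀ : 0 < lamV V c) (hl : lamV V c ≤ l) :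
    log (1 + cdfV V l) / l ≤ tauV V c :=
  le_csSup (bddAbove_tauV hl₀) ⟨l, hl, rfl⟩

lemma tauV_pos {c : ℝ} (hc : 0 < c) (hclt : c < lap V 0) : 0 < tauV V c := by
  have hl := lamV_pos hc hclt
  have hcdf := le_cdfV_lamV hclt
  have hlog : 0 < log (1 + cdfV V (lamV V c)) := log_pos (by linarith)
  exact (div_pos hlog hl).trans_le (log_one_add_cdfV_div_le_tauV hl le_rfl)

lemma one_add_cdfV_le_exp_tauV {c l : ℝ} (hc : 0 < c) (hclt : c < lap V 0)
    (hl : lamV V c ≤ l) : 1 + cdfV V l ≤ exp (tauV V c * l) := by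
  have hl₀ := lamV_pos hc hclt
  have h := log_one_add_cdfV_div_le_tauV hl₀ hl
  have hcdf0 : 0 ≤ cdfV V l := ENNReal.toReal_nonneg
  rwa [div_le_iff₀ (hl₀.trans_le hl), log_le_iff_le_exp (by linarith)] at h

lemma lap_le_of_tauV_lt {c t : ℝ} (hc : 0 < c) (hclt : c < lap V 0) (ht : tauV V c < t) :
    lap V t ≤ c + t / (t - tauV V c) * exp (-(t - tauV V c) * lamV V c) := by
  have hl := lamV_pos hc hclt
  have ht0 : 0 < t := (tauV_pos hc hclt).trans ht
  rw [lap_eq_setIntegral_Ioo_add_Ici hl ht0.le]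
  refine add_le_add (setIntegral_Ioo_lamV_le hc.le ht0.le)
    (setIntegral_Ici_exp_neg_mul_le V ht0 ht fun s hs => ?_)
  calc V (Ico (lamV V c) s) ≤ V (Ioc 0 s) :=
        measure_mono fun x hx => ⟨hl.trans_le hx.1, hx.2.le⟩
    _ = ENNReal.ofReal (cdfV V s) := (ofReal_cdfV s).symm
    _ ≤ ENNReal.ofReal (exp (tauV V c * s)) :=
        ENNReal.ofReal_le_ofReal (by linarith [one_add_cdfV_le_exp_tauV hc hclt hs.le])

theorem tauV_le_TmixV {c : ℝ} (hc : 0 < c) (hclt : c < lap V 0) :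
    tauV V c ≤ TmixV V (c / (1 + c)) := by
  set T := TmixV V (c / (1 + c))
  refine Real.sSup_le ?_ (TmixV_nonneg _)
  rintro _ ⟨l, hl : lamV V c ≤ l, rfl⟩
  have hl0 : 0 < l := (lamV_pos hc hclt).trans_le hl
  set v := cdfV V l
  have hcv : c ≤ v := (le_cdfV_lamV hclt).trans (cdfV_mono hl)
  have hlap : v * exp (-T * l) ≤ c / (1 + c) :=
    (cdfV_mul_exp_le_lap (TmixV_nonneg _) l).trans (lap_TmixV_le (by positivity))
  -- `x ↦ x / (1 + x)` is increasing, so `v e^{-Tl} ≤ v / (1 + v)`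
  have hmono : c / (1 + c) ≤ v / (1 + v) := by
    rw [div_le_div_iff₀ (by positivity) (by linarith)]
    linarith
  have hexp : 1 + v ≤ exp (T * l) := by
    have h : (1 + v) * exp (-T * l) ≤ 1 := by
      rw [le_div_iff₀ (by linarith)] at hmono
      nlinarith [exp_pos (-T * l)]
    rwa [neg_mul, exp_neg, ← div_eq_mul_inv, div_le_one (exp_pos _)] at h
  rwa [div_le_iff₀ hl0, log_le_iff_le_exp (by linarith)]

theorem mul_TmixV_le_tauV {c A : ℝ} (hc : 0 < c) (hclt : c < lap V 0) (hA : 0 < A) :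
    √(tauV V c * lamV V c) / (√(tauV V c * lamV V c) + A) *
        TmixV V (c + (A + √(tauV V c * lamV V c)) /
          (A * exp (A * √(tauV V c * lamV V c)))) ≤ tauV V c := by
  set τ := tauV V c
  set l := lamV V c
  set α := √(τ * l)
  have hτ : 0 < τ := tauV_pos hc hclt
  have hl : 0 < l := lamV_pos hc hclt
  have hα : 0 < α := sqrt_pos.mpr (by positivity)
  have hα2 : α ^ 2 = τ * l := sq_sqrt (by positivity)
  -- chosen so that `(t - τ) λ_V(c) = Aα` and `t / (t - τ) = (A + α) / A`
  set t := (α + A) / α * τ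
  have htτ : t - τ = A * τ / α := by
    simp only [t]
    field_simp
    ring
  have ht : τ < t := by
    rw [← sub_pos, htτ]
    positivity
  have hlap : lap V t ≤ c + (A + α) / (A * exp (A * α)) := by
    refine (lap_le_of_tauV_lt hc hclt ht).trans_eq ?_
    have hexp : (t - τ) * l = A * α := by
      rw [htτ]
      field_simp
      linarith
    rw [neg_mul, hexp, exp_neg, htτ]
    simp only [t]
    field_simp
    ring
  calc α / (α + A) * TmixV V (c + (A + α) / (A * exp (A * α)))
      ≤ α / (α + A) * t := by
        gcongr
        exact TmixV_le (hτ.trans ht).le hlap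
    _ = τ := by
        simp only [t]
        field_simp

theorem TmixV_le_TmixV_add {ε c₁ c₂ B : ℝ} (hε : 0 < ε) (hc₁ : 0 < c₁) (hc₁₂ : c₁ < c₂)
    (hc₂lt : c₂ < lap V 0) (hB : 0 < B) :
    TmixV V (c₁ + c₂ * exp (-TmixV V ε * lamV V c₁) + 2 * ε * exp (-B)) ≤
      TmixV V ε + 2 * B / lamV V c₂ := by
  set T := TmixV V ε
  set l₁ := lamV V c₁
  set l₂ := lamV V c₂
  have hT0 : 0 ≤ T := TmixV_nonneg ε
  have hl₁ : 0 < l₁ := lamV_pos hc₁ (hc₁₂.trans hc₂lt)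
  have hl₂ : 0 < l₂ := lamV_pos (hc₁.trans hc₁₂) hc₂lt
  have hl₁₂ : l₁ ≤ l₂ := lamV_mono hc₂lt hc₁₂.le
  set S := T + 2 * B / l₂
  have hTS : T ≤ S := le_add_of_nonneg_right (by positivity)
  have hS0 : 0 ≤ S := hT0.trans hTS
  have hint := integrableOn_exp_neg_mul (V := V) hS0
  have hsplit : ∫ x in Ici l₁, exp (-S * x) ∂V =
      ∫ x in Ico l₁ l₂, exp (-S * x) ∂V + ∫ x in Ici l₂, exp (-S * x) ∂V := by
    rw [← Ico_union_Ici_eq_Ici hl₁₂]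
    exact setIntegral_union (disjoint_left.mpr fun _ hx hx' => hx.2.not_ge hx') measurableSet_Ici
      (hint.mono_set fun x hx => hl₁.trans_le hx.1)
      (hint.mono_set fun x (hx : l₂ ≤ x) => hl₂.trans_le hx)
  have hlow : ∫ x in Ioo 0 l₁, exp (-S * x) ∂V ≤ c₁ := setIntegral_Ioo_lamV_le hc₁.le hS0
  have hmid : ∫ x in Ico l₁ l₂, exp (-S * x) ∂V ≤ c₂ * exp (-T * l₁) := by
    refine (setIntegral_exp_neg_mul_le Ico_subset_Ici_self hS0).trans ?_
    have hmass : V.real (Ico l₁ l₂) ≤ c₂ :=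
      (measureReal_mono (fun x hx => ⟨hl₁.trans_le hx.1, hx.2⟩ : Ico l₁ l₂ ⊆ Ioo 0 l₂)).trans
        (measureReal_Ioo_lamV_le (hc₁.trans hc₁₂).le)
    rw [mul_comm]
    exact mul_le_mul hmass (exp_le_exp.mpr (by nlinarith)) (exp_pos _).le (hc₁.trans hc₁₂).le
  have hhigh : ∫ x in Ici l₂, exp (-S * x) ∂V ≤ 2 * ε * exp (-B) := by
    have hsub : Ici l₂ ⊆ Ioi 0 := fun x (hx : l₂ ≤ x) => hl₂.trans_le hx
    have hdecay : ∀ x ∈ Ici l₂, exp (-S * x) ≤ exp (-(2 * B)) * exp (-T * x) := fun x hx => by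
      have hx : l₂ ≤ x := hx
      have hBx : 2 * B ≤ 2 * B / l₂ * x := by
        rw [div_mul_eq_mul_div, le_div_iff₀ hl₂]
        nlinarith
      rw [← exp_add, exp_le_exp]
      simp only [S]
      nlinarith
    calc ∫ x in Ici l₂, exp (-S * x) ∂V
        ≤ ∫ x in Ici l₂, exp (-(2 * B)) * exp (-T * x) ∂V :=
          setIntegral_mono_on (hint.mono_set hsub)
            (((integrableOn_exp_neg_mul hT0).mono_set hsub).const_mul _) measurableSet_Ici hdecay
      _ = exp (-(2 * B)) * ∫ x in Ici l₂, exp (-T * x) ∂V := integral_const_mul _ _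
      _ ≤ exp (-(2 * B)) * lap V T := by
          gcongr
          exact setIntegral_mono_set (integrableOn_exp_neg_mul hT0)
            (ae_of_all _ fun _ => (exp_pos _).le)
            hsub.eventuallyLE
      _ ≤ exp (-(2 * B)) * ε := by
          gcongr
          exact lap_TmixV_le hε
      _ ≤ exp (-B) * ε := by
          gcongr
          linarith
      _ ≤ 2 * ε * exp (-B) := by nlinarith [exp_pos (-B)]
  refine TmixV_le hS0 ?_
  rw [lap_eq_setIntegral_Ioo_add_Ici hl₁ hS0, hsplit]
  linarith

end

theorem stmt_9_general (V : Measure ℝ) [IsFiniteMeasure V]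
    (ε c c₁ c₂ : ℝ) (hε : 0 < ε)
    (hc : 0 < c) (hclt : c < lap V 0)
    (hc₁ : 0 < c₁) (hc₁₂ : c₁ < c₂) (hc₂lt : c₂ < lap V 0) :
    (∀ A > (0 : ℝ),
      Real.sqrt (tauV V c * lamV V c) / (Real.sqrt (tauV V c * lamV V c) + A) *
          TmixV V (c + (A + Real.sqrt (tauV V c * lamV V c)) /
            (A * Real.exp (A * Real.sqrt (tauV V c * lamV V c)))) ≤ tauV V c ∧
        tauV V c ≤ TmixV V (c / (1 + c))) ∧
      ∀ B > (0 : ℝ),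
        TmixV V (c₁ + c₂ * Real.exp (-TmixV V ε * lamV V c₁) + 2 * ε * Real.exp (-B)) ≤
          TmixV V ε + 2 * B / lamV V c₂ :=
  ⟨fun _ hA => ⟨mul_TmixV_le_tauV hc hclt hA, tauV_le_TmixV hc hclt⟩,
    fun _ hB => TmixV_le_TmixV_add hε hc₁ hc₁₂ hc₂lt hB⟩

theorem stmt_9 (V : Measure ℝ) [IsFiniteMeasure V] (hsupp : V (Iic 0) = 0)
    (ε c c₁ c₂ : ℝ) (hε : 0 < ε) (hεlt : ε < lap V 0)
    (hc : 0 < c) (hclt : c < lap V 0)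
    (hc₁ : 0 < c₁) (hc₁₂ : c₁ < c₂) (hc₂lt : c₂ < lap V 0) :
    (∀ A > (0 : ℝ),
      Real.sqrt (tauV V c * lamV V c) / (Real.sqrt (tauV V c * lamV V c) + A) *
          TmixV V (c + (A + Real.sqrt (tauV V c * lamV V c)) /
            (A * Real.exp (A * Real.sqrt (tauV V c * lamV V c)))) ≤ tauV V c ∧
        tauV V c ≤ TmixV V (c / (1 + c))) ∧
      ∀ B > (0 : ℝ),
        TmixV V (c₁ + c₂ * Real.exp (-TmixV V ε * lamV V c₁) + 2 * ε * Real.exp (-B)) ≤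
          TmixV V ε + 2 * B / lamV V c₂ :=
  stmt_9_general V ε c c₁ c₂ hε hc hclt hc₁ hc₁₂ hc₂lt
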